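/- Let N be a positive integer, r > 0, and consider the electrical network G whose underlying graph is a path with vertices 0, 1, …, N+1, conductances c_{k,k+1} = 1 for 0 ≤ k < N and c_{N,N+1} = r. Let G' be the path on vertices 0, 1, …, N with conductances c'_{k,k+1} = (N − k − 1 + 1/r)(N − k + 1/r) / ( (1/r)(1 + 1/r) ) for 0 ≤ k < N. Fix a starting vertex m with 1 ≤ m ≤ N. Let X be the discrete-time random walk on G started at m, let τ be the first time X hits 0 or N+1, and let Y be the discrete-time random walk on G' started at m. Then the path of Y stopped upon hitting 0 has the same distribution as the path of X stopped at time τ, conditioned on the event X_τ = 0. -/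

import Mathlib

open MeasureTheory ProbabilityTheory Filter
open scoped ENNReal NNReal Classical

noncomputable section

/-- The exponential distribution on `ℝ` with mean `μ`: density `μ⁻¹ * exp (-x/μ)`
on `(0, ∞)`. -/
def expDist (μ : ℝ) : Measure ℝ :=
  (volume.restrict (Set.Ioi (0 : ℝ))).withDensity fun x =>
    ENNReal.ofReal (μ⁻¹ * Real.exp (-x / μ))

/-- An electrical network on a vertex type `V`: symmetric nonnegative conductances.
The edges are the pairs of vertices with positive conductance. -/
structure ElecNetwork (V : Type) where
  c : V → V → ℝ
  symm : ∀ x y, c x y = c y x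
  nonneg : ∀ x y, 0 ≤ c x y

namespace ElecNetwork

variable {V : Type}

/-- Total conductance at a vertex. -/
def cTot [Fintype V] (G : ElecNetwork V) (x : V) : ℝ := ∑ y, G.c x y

/-- One-step transition probability of the associated random walk. -/
def jump [Fintype V] (G : ElecNetwork V) (x y : V) : ℝ := G.c x y / G.cTot x

/-- Total conductance of the network (`= 2 |E|` for a graph, counting each
self-loop once in the sum). -/
def cSum [Fintype V] (G : ElecNetwork V) : ℝ := ∑ x, ∑ y, G.c x y

/-- The underlying simple graph: distinct vertices joined by positive conductance. -/
def graph (G : ElecNetwork V) : SimpleGraph V where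
  Adj x y := x ≠ y ∧ 0 < G.c x y
  symm := by
    constructor
    intro x y h
    refine ⟨h.1.symm, ?_⟩
    rw [G.symm y x]
    exact h.2
  loopless := by
    constructor
    intro x h
    exact h.1 rfl

/-- Connectedness of the network. -/
def Conn (G : ElecNetwork V) : Prop := G.graph.Connected

end ElecNetwork

/-- `J` is (a realization of) the discrete-time random walk on `G` started at `v₀`
under the probability measure `P`: the finite-dimensional distributions are the
products of the one-step transition probabilities (Ionescu–Tulcea trajectory law). -/
def IsDiscreteWalk {V : Type} [Fintype V] [MeasurableSpace V] (G : ElecNetwork V) (v₀ : V)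
    {Ω : Type} [MeasurableSpace Ω] (P : Measure Ω) (J : ℕ → Ω → V) : Prop :=
  (∀ n, Measurable (J n)) ∧
    ∀ (n : ℕ) (w : ℕ → V),
      P {ω | ∀ i ≤ n, J i ω = w i} =
        (if w 0 = v₀ then 1 else 0) *
          ∏ i ∈ Finset.range n, ENNReal.ofReal (G.jump (w i) (w (i + 1)))

/-- First index at which the sequence `J` enters the set `A`. -/
def hitIdx {V Ω : Type} (J : ℕ → Ω → V) (A : Set V) (ω : Ω) : ℕ :=
  sInf {n | J n ω ∈ A}

/-- The sequence `J` stopped upon entering `A`. -/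
def stopped {V Ω : Type} (J : ℕ → Ω → V) (A : Set V) (n : ℕ) (ω : Ω) : V :=
  J (min n (hitIdx J A ω)) ω

/-- A continuous-time random walk on the network `G` started at `v₀`, realized on the
probability space `(Ω, P)` via its jump chain `J` (the discrete-time walk) together
with an independent i.i.d. sequence `ξ` of mean-one exponential holding times. -/
structure CTRW {V : Type} [Fintype V] [MeasurableSpace V] (G : ElecNetwork V) (v₀ : V)
    {Ω : Type} [MeasurableSpace Ω] (P : Measure Ω) where
  J : ℕ → Ω → V
  ξ : ℕ → Ω → ℝ
  walk : IsDiscreteWalk G v₀ P J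
  measξ : ∀ n, Measurable (ξ n)
  lawξ : ∀ n, P.map (ξ n) = expDist 1
  iidξ : iIndepFun ξ P
  indepJξ : IndepFun (fun ω => fun n => J n ω) (fun ω => fun n => ξ n ω) P

namespace CTRW

variable {V : Type} [Fintype V] [MeasurableSpace V] {G : ElecNetwork V} {v₀ : V}
  {Ω : Type} [MeasurableSpace Ω] {P : Measure Ω}

/-- Time of the `n`-th jump. -/
def S (W : CTRW G v₀ P) (n : ℕ) (ω : Ω) : ℝ := ∑ i ∈ Finset.range n, W.ξ i ω

/-- Number of jumps made up to time `t`. -/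
def jumps (W : CTRW G v₀ P) (t : ℝ) (ω : Ω) : ℕ := sSup {n | W.S n ω ≤ t}

/-- The continuous-time walk at time `t`. -/
def X (W : CTRW G v₀ P) (t : ℝ) (ω : Ω) : V := W.J (W.jumps t ω) ω

/-- Local time at the vertex `v` up to time `t`, normalized by total conductance. -/
def L (W : CTRW G v₀ P) (t : ℝ) (v : V) (ω : Ω) : ℝ :=
  (G.cTot v)⁻¹ * ∫ s in (0:ℝ)..t, (if W.X s ω = v then (1:ℝ) else 0)

/-- Inverse local time at the starting vertex: first time the local time at `v₀`
reaches `t`. -/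
def invL (W : CTRW G v₀ P) (t : ℝ) (ω : Ω) : ℝ :=
  sInf {s : ℝ | 0 ≤ s ∧ t ≤ W.L s v₀ ω}

/-- First time the walk is in the set `A`. -/
def hitTime (W : CTRW G v₀ P) (A : Set V) (ω : Ω) : ℝ :=
  sInf {t : ℝ | 0 ≤ t ∧ W.X t ω ∈ A}

/-- The cover time: the first time every vertex has been visited. -/
def coverTime (W : CTRW G v₀ P) (ω : Ω) : ℝ :=
  sInf {t : ℝ | 0 ≤ t ∧ ∀ v : V, ∃ s, 0 ≤ s ∧ s ≤ t ∧ W.X s ω = v}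

end CTRW

/-- Dirichlet energy of `f`, with the `1/4` normalization of the GFF density. -/
def gffEnergy {V : Type} [Fintype V] (G : ElecNetwork V) (f : V → ℝ) : ℝ :=
  (1 / 4) * ∑ x, ∑ y, G.c x y * (f x - f y) ^ 2

/-- Extend a function on `V \ {v₀}` by zero at `v₀`. -/
def extendZero {V : Type} (v₀ : V) (f : {v : V // v ≠ v₀} → ℝ) (x : V) : ℝ :=
  if h : x = v₀ then 0 else f ⟨x, h⟩

/-- Unnormalized GFF measure on functions on `V \ {v₀}`. -/
def gffPre {V : Type} [Fintype V] (G : ElecNetwork V) (v₀ : V) :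
    Measure ({v : V // v ≠ v₀} → ℝ) :=
  volume.withDensity fun f => ENNReal.ofReal (Real.exp (-gffEnergy G (extendZero v₀ f)))

/-- The law of the Gaussian free field on `G` with boundary `{v₀}`, as a probability
measure on `V → ℝ` (the field vanishes at `v₀`). -/
def gffMeasure {V : Type} [Fintype V] (G : ElecNetwork V) (v₀ : V) : Measure (V → ℝ) :=
  (gffPre G v₀ Set.univ)⁻¹ • (gffPre G v₀).map (extendZero v₀)

/-- `η` is a Gaussian free field on `G` with boundary `{v₀}`. -/
def IsGFF {V : Type} [Fintype V] (G : ElecNetwork V) (v₀ : V) {Ω : Type}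
    [MeasurableSpace Ω] (P : Measure Ω) (η : Ω → V → ℝ) : Prop :=
  Measurable η ∧ P.map η = gffMeasure G v₀

/-- `M = 𝔼 max_x η_x`: the expected maximum of the field `η`. -/
def gffM {Ω V : Type} [MeasurableSpace Ω] (P : Measure Ω) (η : Ω → V → ℝ) : ℝ :=
  ∫ ω, (⨆ x, η ω x) ∂P

/-- `R = max_{x,y} 𝔼 (η_x - η_y)²`: the effective resistance diameter. -/
def gffR {Ω V : Type} [MeasurableSpace Ω] (P : Measure Ω) (η : Ω → V → ℝ) : ℝ :=
  ⨆ q : V × V, ∫ ω, (η ω q.1 - η ω q.2) ^ 2 ∂P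

/-- `B` is a standard one-dimensional Brownian motion started at `x`: measurable,
a.s. continuous, independent Gaussian increments. -/
structure IsBM {Ω : Type} [MeasurableSpace Ω] (P : Measure Ω) (B : ℝ → Ω → ℝ) (x : ℝ) :
    Prop where
  meas : ∀ t, Measurable (B t)
  start : ∀ᵐ ω ∂P, B 0 ω = x
  cont : ∀ᵐ ω ∂P, Continuous fun t => B t ω
  indepIncr : ∀ (n : ℕ) (t : Fin (n + 1) → ℝ), Monotone t → 0 ≤ t 0 →
    iIndepFun
      (fun i : Fin n => fun ω => B (t i.succ) ω - B (t i.castSucc) ω) P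
  lawIncr : ∀ s t : ℝ, 0 ≤ s → s ≤ t →
    P.map (fun ω => B t ω - B s ω) = gaussianReal 0 (t - s).toNNReal

/-- `B` is a standard planar Brownian motion started at `y`: the two coordinates are
independent standard one-dimensional Brownian motions. -/
structure IsPlanarBM {Ω : Type} [MeasurableSpace Ω] (P : Measure Ω) (B : ℝ → Ω → ℝ × ℝ)
    (y : ℝ × ℝ) : Prop where
  fst : IsBM P (fun t ω => (B t ω).1) y.1
  snd : IsBM P (fun t ω => (B t ω).2) y.2
  indep : IndepFun (fun ω => fun t : ℝ => (B t ω).1) (fun ω => fun t : ℝ => (B t ω).2) P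

/-- Squared Euclidean norm on `ℝ × ℝ`. -/
def normSq2 (p : ℝ × ℝ) : ℝ := p.1 ^ 2 + p.2 ^ 2

/-- Conductance function of a path whose `k`-th edge `(k, k+1)` has conductance `cf k`. -/
def pathC (cf : ℕ → ℝ) {M : ℕ} (a b : Fin M) : ℝ :=
  if a.val + 1 = b.val then cf a.val else if b.val + 1 = a.val then cf b.val else 0

/-- The network `G` is the path with vertices `0, 1, …, M-1` and conductance `cf k`
between `k` and `k+1`. -/
def IsPathNetwork {M : ℕ} (G : ElecNetwork (Fin M)) (cf : ℕ → ℝ) : Prop :=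
  ∀ a b, G.c a b = pathC cf a b

/-! ### The `N`-fold refinement of a network -/

/-- An arbitrary enumeration of the (finite) vertex set, used to pick a canonical
orientation for each edge. -/
def vidx {V : Type} [Fintype V] (v : V) : ℕ := (Fintype.equivFin V v).val

/-- Canonically oriented edges of the network. -/
abbrev EdgeIdx {V : Type} [Fintype V] (G : ElecNetwork V) : Type :=
  {e : V × V // G.c e.1 e.2 ≠ 0 ∧ vidx e.1 < vidx e.2}

/-- The vertex set of the `N`-fold refinement: the original vertices together with
`N - 1` interior subdivision points on each edge. -/
abbrev RefVert {V : Type} [Fintype V] (G : ElecNetwork V) (N : ℕ) : Type :=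
  V ⊕ (EdgeIdx G × Fin (N - 1))

/-- The point `v_{xy,i}` (`0 ≤ i ≤ N`) of the refined network: the `i`-th subdivision
point along the edge from `x` to `y` (so `v_{xy,0} = x`, `v_{xy,N} = y`, and
`v_{yx,i} = v_{xy,N-i}`). -/
def vmap {V : Type} [Fintype V] (G : ElecNetwork V) (N : ℕ) (x y : V) (i : ℕ) :
    RefVert G N :=
  if _h0 : i = 0 then Sum.inl x
  else if _hN : N ≤ i then Sum.inl y
  else if h : G.c x y ≠ 0 ∧ vidx x < vidx y then
    Sum.inr (⟨(x, y), h⟩, ⟨i - 1, by omega⟩)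
  else if h' : G.c y x ≠ 0 ∧ vidx y < vidx x then
    Sum.inr (⟨(y, x), h'⟩, ⟨N - i - 1, by omega⟩)
  else Sum.inl x

/-- Conductances of the `N`-fold refinement: each edge of conductance `c` is replaced
by a path of `N` edges, each of conductance `N·c`. -/
def refC {V : Type} [Fintype V] (G : ElecNetwork V) (N : ℕ) :
    RefVert G N → RefVert G N → ℝ
  | Sum.inl _, Sum.inl _ => 0
  | Sum.inl x, Sum.inr (e, i) =>
      (if x = e.1.1 ∧ i.val = 0 then (N : ℝ) * G.c e.1.1 e.1.2 else 0) +
      (if x = e.1.2 ∧ i.val = N - 2 then (N : ℝ) * G.c e.1.1 e.1.2 else 0)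
  | Sum.inr (e, i), Sum.inl x =>
      (if x = e.1.1 ∧ i.val = 0 then (N : ℝ) * G.c e.1.1 e.1.2 else 0) +
      (if x = e.1.2 ∧ i.val = N - 2 then (N : ℝ) * G.c e.1.1 e.1.2 else 0)
  | Sum.inr (e, i), Sum.inr (f, j) =>
      if e = f ∧ (i.val + 1 = j.val ∨ j.val + 1 = i.val) then (N : ℝ) * G.c e.1.1 e.1.2
      else 0

/-- The `N`-fold refinement of a (loopless) network `G`, for `N ≥ 2`. -/
def ElecNetwork.refine {V : Type} [Fintype V] (G : ElecNetwork V) (N : ℕ) :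
    ElecNetwork (RefVert G N) where
  c := refC G N
  symm := by
    rintro (x | ⟨e, i⟩) (y | ⟨f, j⟩)
    · rfl
    · rfl
    · rfl
    · simp only [refC]
      rcases eq_or_ne e f with h | h
      · subst h
        by_cases h2 : i.val + 1 = j.val ∨ j.val + 1 = i.val
        · rw [if_pos ⟨rfl, h2⟩, if_pos ⟨rfl, h2.symm⟩]
        · rw [if_neg (by tauto), if_neg (by tauto)]
      · rw [if_neg (by tauto), if_neg (by tauto)]
  nonneg := by
    have hc : ∀ a b : V, (0 : ℝ) ≤ (N : ℝ) * G.c a b := fun a b =>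
      mul_nonneg (Nat.cast_nonneg N) (G.nonneg a b)
    rintro (x | ⟨e, i⟩) (y | ⟨f, j⟩)
    · exact le_rfl
    · refine add_nonneg ?_ ?_ <;> (split_ifs <;> first | exact hc _ _ | exact le_rfl)
    · refine add_nonneg ?_ ?_ <;> (split_ifs <;> first | exact hc _ _ | exact le_rfl)
    · simp only [refC]
      split_ifs <;> first | exact hc _ _ | exact le_rfl

end

/-!
Let `h v` be the probability that the walk on `G` started at `v` leaves `{1, …, N}` through `0`.
Conditioning the stopped walk on that event weights a path `w₀ … w_k` by `h w_k / h w₀`, so the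
conditioned walk is the Doob transform `p(x, y) h(y) / h(x)` of the walk on `G`. Since `h` is
harmonic, this transform is again the walk on a network, with conductances `c(x, y) h(x) h(y)`,
and it still exits at `0` almost surely: its exit probabilities are those of the original walk
divided by `h`. On the path, `h` is the voltage of a series circuit: the current through the
unit resistors and the final resistor `1/r` is constant, so `h k = (N - k + 1/r) / (N + 1/r)`,
and `c(k, k+1) h(k) h(k+1)` is a constant multiple of `c'_{k,k+1}`.
-/

noncomputable section

namespace ElecNetwork

variable {V : Type} [Fintype V] (G : ElecNetwork V)

lemma cTot_nonneg (x : V) : 0 ≤ G.cTot x :=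
  Finset.sum_nonneg fun y _ => G.nonneg x y

lemma jump_nonneg (x y : V) : 0 ≤ G.jump x y :=
  div_nonneg (G.nonneg x y) (G.cTot_nonneg x)

lemma sum_c_mul_eq_cTot_mul (x : V) (f : V → ℝ) :
    ∑ y, G.c x y * f y = G.cTot x * ∑ y, G.jump x y * f y := by
  rcases eq_or_ne (G.cTot x) 0 with h | h
  · have hc : ∀ y, G.c x y = 0 := fun y =>
      (Finset.sum_eq_zero_iff_of_nonneg fun y _ => G.nonneg x y).1 h y (Finset.mem_univ y)
    simp [hc, h]
  · rw [Finset.mul_sum]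
    refine Finset.sum_congr rfl fun y _ => ?_
    unfold jump
    field_simp

lemma sum_ofReal_jump_le_one (x : V) : ∑ y, ENNReal.ofReal (G.jump x y) ≤ 1 := by
  rw [← ENNReal.ofReal_sum_of_nonneg fun y _ => G.jump_nonneg x y, ← ENNReal.ofReal_one]
  refine ENNReal.ofReal_le_ofReal ?_
  unfold jump
  rw [← Finset.sum_div]
  exact div_self_le_one _

def pathProb (n : ℕ) (w : ℕ → V) : ℝ≥0∞ :=
  ∏ i ∈ Finset.range n, ENNReal.ofReal (G.jump (w i) (w (i + 1)))

lemma pathProb_succ_update (n : ℕ) (w : ℕ → V) (u : V) :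
    G.pathProb (n + 1) (Function.update w (n + 1) u) =
      G.pathProb n w * ENNReal.ofReal (G.jump (w n) u) := by
  rw [pathProb, Finset.prod_range_succ, Function.update_self,
    Function.update_of_ne (by omega : n ≠ n + 1)]
  congr 1
  exact Finset.prod_congr rfl fun i hi => by
    rw [Function.update_of_ne (by simp at hi; omega), Function.update_of_ne (by simp at hi; omega)]

/-- `firstHitProb G A z j v` is the probability that the walk from `v` enters `A` for the first
time at step `j`, and does so at `z`. -/
def firstHitProb (A : Set V) (z : V) : ℕ → V → ℝ≥0∞
  | 0, v => if v = z then 1 else 0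
  | j + 1, v => if v ∈ A then 0 else ∑ u, ENNReal.ofReal (G.jump v u) * firstHitProb A z j u

def hitProb (A : Set V) (z : V) (v : V) : ℝ≥0∞ := ∑' j, G.firstHitProb A z j v

variable {G} {A : Set V} {z v : V}

lemma firstHitProb_of_mem_of_ne (hv : v ∈ A) (hvz : v ≠ z) (j : ℕ) :
    G.firstHitProb A z j v = 0 := by
  cases j <;> simp [firstHitProb, hv, hvz]

lemma hitProb_of_mem (hv : v ∈ A) : G.hitProb A z v = if v = z then 1 else 0 := by
  rw [hitProb, tsum_eq_zero_add' ENNReal.summable]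
  simp [firstHitProb, hv]

lemma hitProb_of_notMem (hz : z ∈ A) (hv : v ∉ A) :
    G.hitProb A z v = ∑ u, ENNReal.ofReal (G.jump v u) * G.hitProb A z u := by
  have hvz : v ≠ z := fun h => hv (h ▸ hz)
  rw [hitProb, tsum_eq_zero_add' ENNReal.summable]
  simp only [firstHitProb, hv, hvz, if_false, zero_add, hitProb, ← ENNReal.tsum_mul_left]
  exact Summable.tsum_finsetSum fun u _ => ENNReal.summable

lemma sum_range_firstHitProb_le_one (hz : z ∈ A) (M : ℕ) (v : V) :
    ∑ j ∈ Finset.range M, G.firstHitProb A z j v ≤ 1 := by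
  induction M generalizing v with
  | zero => simp
  | succ M ih =>
    rw [Finset.sum_range_succ']
    by_cases hv : v ∈ A
    · simp only [firstHitProb, hv, if_true, Finset.sum_const_zero, zero_add]
      split_ifs <;> simp
    · have hvz : v ≠ z := fun h => hv (h ▸ hz)
      simp only [firstHitProb, hv, hvz, if_false, add_zero]
      rw [Finset.sum_comm]
      calc ∑ u, ∑ j ∈ Finset.range M, ENNReal.ofReal (G.jump v u) * G.firstHitProb A z j u
          = ∑ u, ENNReal.ofReal (G.jump v u) * ∑ j ∈ Finset.range M, G.firstHitProb A z j u := by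
            simp only [Finset.mul_sum]
        _ ≤ ∑ u, ENNReal.ofReal (G.jump v u) * 1 := by gcongr with u; exact ih u
        _ ≤ 1 := by simpa using G.sum_ofReal_jump_le_one v

lemma hitProb_le_one (hz : z ∈ A) (v : V) : G.hitProb A z v ≤ 1 :=
  ENNReal.tsum_le_of_sum_range_le fun M => sum_range_firstHitProb_le_one hz M v

lemma hitProb_ne_top (hz : z ∈ A) (v : V) : G.hitProb A z v ≠ ⊤ :=
  ne_top_of_le_ne_top ENNReal.one_ne_top (hitProb_le_one hz v)

lemma toReal_hitProb_of_notMem (hz : z ∈ A) (hv : v ∉ A) :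
    (G.hitProb A z v).toReal = ∑ u, G.jump v u * (G.hitProb A z u).toReal := by
  rw [hitProb_of_notMem hz hv, ENNReal.toReal_sum fun u _ =>
    ENNReal.mul_ne_top ENNReal.ofReal_ne_top (hitProb_ne_top hz u)]
  simp only [ENNReal.toReal_mul, ENNReal.toReal_ofReal (G.jump_nonneg v _)]

end ElecNetwork

section DoobTransform

variable {V V' : Type} [Fintype V] [Fintype V'] {G : ElecNetwork V} {G' : ElecNetwork V'}
  {e : V' → V} {A : Set V} {z' : V'}

/-- Stated with products rather than the ratio `h (e y) / h (e x)`, so that it stays meaningful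
where `h` vanishes. -/
def IsDoobTransform (G : ElecNetwork V) (G' : ElecNetwork V') (e : V' → V) (A : Set V)
    (h : V → ℝ≥0∞) : Prop :=
  ∀ x, e x ∉ A → ∀ y,
    ENNReal.ofReal (G'.jump x y) * h (e x) = ENNReal.ofReal (G.jump (e x) (e y)) * h (e y)

/-- Harmonicity of `h` at `e x` makes the total conductance of `x` in `G'` equal to
`κ h(e x)² c_{e x}`. -/
lemma ElecNetwork.jump_mul_eq_of_c_eq {h : V → ℝ} {κ : ℝ} (he : Function.Injective e)
    (hκ : κ ≠ 0) (hnn : ∀ v, 0 ≤ h v) (hzero : ∀ v ∉ Set.range e, h v = 0)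
    (hc : ∀ x y, G'.c x y = κ * G.c (e x) (e y) * h (e x) * h (e y)) {x : V'}
    (hx : ∑ v, G.jump (e x) v * h v = h (e x)) (y : V') :
    G'.jump x y * h (e x) = G.jump (e x) (e y) * h (e y) := by
  have hsum : ∑ y, G.c (e x) (e y) * h (e y) = G.cTot (e x) * h (e x) := by
    rw [← hx, ← ElecNetwork.sum_c_mul_eq_cTot_mul]
    exact Fintype.sum_of_injective e he _ _ (fun v hv => by simp [hzero v hv]) fun _ => rfl
  have hcTot : G'.cTot x = κ * h (e x) * (G.cTot (e x) * h (e x)) := by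
    rw [ElecNetwork.cTot, ← hsum, Finset.mul_sum]
    exact Finset.sum_congr rfl fun y _ => by rw [hc]; ring
  by_cases hhx : h (e x) = 0
  · have hterms := (Finset.sum_eq_zero_iff_of_nonneg fun v _ =>
      mul_nonneg (G.jump_nonneg (e x) v) (hnn v)).1 (hx.trans hhx) (e y) (Finset.mem_univ _)
    rw [hhx, mul_zero, hterms]
  by_cases hT : G.cTot (e x) = 0
  · simp [ElecNetwork.jump, hcTot, hT]
  unfold ElecNetwork.jump
  rw [hc, hcTot]
  field_simp

lemma isDoobTransform_hitProb_of_c_eq {κ : ℝ} (he : Function.Injective e)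
    (hA : ∀ v ∉ Set.range e, v ∈ A) (hz : e z' ∈ A) (hκ : κ ≠ 0)
    (hc : ∀ x y, G'.c x y = κ * G.c (e x) (e y) * (G.hitProb A (e z') (e x)).toReal *
      (G.hitProb A (e z') (e y)).toReal) :
    IsDoobTransform G G' e A (G.hitProb A (e z')) := by
  intro x hx y
  have hzero : ∀ v ∉ Set.range e, (G.hitProb A (e z') v).toReal = 0 := fun v hv => by
    rw [ElecNetwork.hitProb_of_mem (hA v hv), if_neg fun h => hv ⟨z', h.symm⟩,
      ENNReal.toReal_zero]
  have key := ElecNetwork.jump_mul_eq_of_c_eq he hκ (fun _ => ENNReal.toReal_nonneg) hzero hc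
    (ElecNetwork.toReal_hitProb_of_notMem hz hx).symm y
  rw [← ENNReal.ofReal_toReal (ElecNetwork.hitProb_ne_top hz (e x)),
    ← ENNReal.ofReal_toReal (ElecNetwork.hitProb_ne_top hz (e y)),
    ← ENNReal.ofReal_mul (G'.jump_nonneg x y), ← ENNReal.ofReal_mul (G.jump_nonneg _ _), key]

namespace IsDoobTransform

lemma pathProb_mul_eq {h : V → ℝ≥0∞} (htr : IsDoobTransform G G' e A h) {n : ℕ}
    {u : ℕ → V'} (hu : ∀ i < n, e (u i) ∉ A) :
    G'.pathProb n u * h (e (u 0)) = G.pathProb n (fun i => e (u i)) * h (e (u n)) := by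
  induction n with
  | zero => simp [ElecNetwork.pathProb]
  | succ n ih =>
    simp only [ElecNetwork.pathProb, Finset.prod_range_succ] at ih ⊢
    rw [mul_right_comm, ih fun i hi => hu i (by omega), mul_assoc, mul_comm (h _),
      htr _ (hu n (by omega)), ← mul_assoc]

variable (htr : IsDoobTransform G G' e A (G.hitProb A (e z'))) (he : Function.Injective e)
  (hA : ∀ v ∉ Set.range e, v ∈ A) (hz : e z' ∈ A)
include htr he hA hz

lemma firstHitProb_mul_eq (j : ℕ) (x : V') :
    G'.firstHitProb (e ⁻¹' A) z' j x * G.hitProb A (e z') (e x) =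
      G.firstHitProb A (e z') j (e x) := by
  induction j generalizing x with
  | zero =>
    by_cases hx : x = z'
    · simp [ElecNetwork.firstHitProb, hx, ElecNetwork.hitProb_of_mem hz]
    · simp [ElecNetwork.firstHitProb, hx, he.ne hx]
  | succ j ih =>
    by_cases hx : e x ∈ A
    · simp [ElecNetwork.firstHitProb, hx]
    simp only [ElecNetwork.firstHitProb, Set.mem_preimage, hx, if_false, Finset.sum_mul]
    calc ∑ u, ENNReal.ofReal (G'.jump x u) * G'.firstHitProb (e ⁻¹' A) z' j u *
            G.hitProb A (e z') (e x)
        = ∑ u, ENNReal.ofReal (G.jump (e x) (e u)) * G.firstHitProb A (e z') j (e u) := by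
          refine Finset.sum_congr rfl fun u _ => ?_
          rw [mul_right_comm, htr x hx, mul_assoc, mul_comm (G.hitProb _ _ _), ih]
      _ = ∑ v, ENNReal.ofReal (G.jump (e x) v) * G.firstHitProb A (e z') j v :=
          Fintype.sum_of_injective e he _ _ (fun v hv => by
            rw [ElecNetwork.firstHitProb_of_mem_of_ne (hA v hv) (fun h => hv ⟨z', h.symm⟩),
              mul_zero])
            fun _ => rfl

lemma hitProb_mul_eq (x : V') :
    G'.hitProb (e ⁻¹' A) z' x * G.hitProb A (e z') (e x) = G.hitProb A (e z') (e x) := by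
  rw [ElecNetwork.hitProb, ← ENNReal.tsum_mul_right]
  simp_rw [htr.firstHitProb_mul_eq he hA hz]
  rfl

end IsDoobTransform

end DoobTransform

section PrefixCylinder

open MeasurableSpace

variable {α : Type}

def prefixCyl (n : ℕ) (w : ℕ → α) : Set (ℕ → α) := {f | ∀ i ≤ n, f i = w i}

lemma isPiSystem_prefixCyl : IsPiSystem {s : Set (ℕ → α) | ∃ n w, s = prefixCyl n w} := by
  rintro _ ⟨n, w, rfl⟩ _ ⟨n', w', rfl⟩ ⟨f, hf, hf'⟩
  wlog hle : n ≤ n' generalizing n n' w w'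
  · rw [Set.inter_comm]
    exact this n' w' n w hf' hf (by omega)
  refine ⟨n', w', Set.inter_eq_right.2 fun g hg i hi => ?_⟩
  rw [hg i (hi.trans hle), ← hf' i (hi.trans hle), hf i hi]

variable [MeasurableSpace α] [MeasurableSingletonClass α]

lemma measurableSet_prefixCyl (n : ℕ) (w : ℕ → α) : MeasurableSet (prefixCyl n w) := by
  simp only [prefixCyl, Set.ofPred_forall]
  exact MeasurableSet.iInter fun i => MeasurableSet.iInter fun _ =>
    (measurableSet_singleton (w i)).preimage (measurable_pi_apply i)

variable [Countable α]

lemma generateFrom_prefixCyl :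
    (MeasurableSpace.pi : MeasurableSpace (ℕ → α)) =
      generateFrom {s | ∃ n w, s = prefixCyl n w} := by
  refine le_antisymm (iSup_le fun i => ?_) (generateFrom_le ?_)
  · rw [← measurable_iff_comap_le]
    refine @measurable_to_countable' _ _ _ _ (generateFrom _) _ fun a => ?_
    have hclamp : ∀ j, min j i < i + 1 := fun j => by omega
    have : (fun f : ℕ → α => f i) ⁻¹' {a} =
        ⋃ u ∈ {u : Fin (i + 1) → α | u (Fin.last i) = a},
          prefixCyl i fun j => u ⟨min j i, hclamp j⟩ := by
      ext f
      simp only [Set.mem_preimage, Set.mem_singleton_iff, Set.mem_iUnion, Set.mem_ofPred_eq,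
        prefixCyl, exists_prop]
      constructor
      · rintro rfl
        exact ⟨fun j => f j, rfl, fun j hj => by simp [min_eq_left hj]⟩
      · rintro ⟨u, rfl, hf⟩
        rw [hf i le_rfl]
        simp [Fin.last]
    rw [this]
    exact MeasurableSet.biUnion (Set.to_countable _) fun u _ =>
      measurableSet_generateFrom ⟨i, _, rfl⟩
  · rintro _ ⟨n, w, rfl⟩
    exact measurableSet_prefixCyl n w

lemma MeasureTheory.Measure.ext_of_prefixCyl {μ ν : Measure (ℕ → α)} [IsProbabilityMeasure μ]
    [IsProbabilityMeasure ν] (h : ∀ n w, μ (prefixCyl n w) = ν (prefixCyl n w)) : μ = ν :=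
  ext_of_generate_finite _ generateFrom_prefixCyl isPiSystem_prefixCyl
    (by rintro _ ⟨n, w, rfl⟩; exact h n w) (by simp)

end PrefixCylinder

section Stopping

variable {V Ω : Type} {J : ℕ → Ω → V} {A : Set V} {ω : Ω} {n : ℕ}

def exitsAt (J : ℕ → Ω → V) (A : Set V) (z : V) : Set Ω := {ω | J (hitIdx J A ω) ω = z}

def firstEntryAfter (J : ℕ → Ω → V) (A : Set V) (z : V) (n j : ℕ) : Set Ω :=
  {ω | (∀ i, n ≤ i → i < n + j → J i ω ∉ A) ∧ J (n + j) ω = z}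

lemma hitIdx_le (h : J n ω ∈ A) : hitIdx J A ω ≤ n := Nat.sInf_le h

lemma hitIdx_mem (h : J n ω ∈ A) : J (hitIdx J A ω) ω ∈ A :=
  Nat.sInf_mem (s := {n | J n ω ∈ A}) ⟨n, h⟩

lemma notMem_of_lt_hitIdx (h : n < hitIdx J A ω) : J n ω ∉ A := Nat.notMem_of_lt_sInf h

lemma stopped_of_le_hitIdx (h : n ≤ hitIdx J A ω) : stopped J A n ω = J n ω := by
  rw [stopped, min_eq_left h]

lemma stopped_of_hitIdx_le (h : hitIdx J A ω ≤ n) :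
    stopped J A n ω = J (hitIdx J A ω) ω := by
  rw [stopped, min_eq_right h]

lemma hitIdx_le_of_stopped_mem (h : stopped J A n ω ∈ A) : hitIdx J A ω ≤ n :=
  (hitIdx_le (J := J) h).trans (min_le_left _ _)

lemma exists_stopIdx (A : Set V) (n : ℕ) (w : ℕ → V) :
    ∃ k ≤ n, (∀ i < k, w i ∉ A) ∧ (k = n ∨ w k ∈ A) := by
  by_cases h : ∃ i, i ≤ n ∧ w i ∈ A
  · refine ⟨Nat.find h, (Nat.find_spec h).1, fun i hi hiA => ?_, Or.inr (Nat.find_spec h).2⟩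
    exact Nat.find_min h hi ⟨hi.le.trans (Nat.find_spec h).1, hiA⟩
  · push Not at h
    exact ⟨n, le_rfl, fun i hi => h i hi.le, Or.inl rfl⟩

lemma hitIdx_eq_iff {k : ℕ} :
    hitIdx J A ω = k ↔
      (J k ω ∈ A ∧ ∀ i < k, J i ω ∉ A) ∨ (k = 0 ∧ ∀ i, J i ω ∉ A) := by
  by_cases h : ∃ i, J i ω ∈ A
  · rw [hitIdx, Nat.sInf_def (s := {n | J n ω ∈ A}) h, Nat.find_eq_iff]
    obtain ⟨i, hi⟩ := h
    exact (or_iff_left fun h' => h'.2 i hi).symm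
  · push Not at h
    rw [hitIdx, Set.eq_empty_of_forall_notMem (s := {n | J n ω ∈ A}) h, Nat.sInf_empty]
    simp [h, eq_comm]

variable {z : V} {w : ℕ → V} {k : ℕ}

/-- Intersecting with `exitsAt` discards the paths that never reach `A`: on them `hitIdx` takes
the junk value `0`, and the stopped path is constant. -/
lemma stoppedCyl_inter_exitsAt_eq (hz : z ∈ A) (hk : k ≤ n) (hout : ∀ i < k, w i ∉ A)
    (hend : k = n ∨ w k ∈ A) (hfrozen : ∀ j, k ≤ j → j ≤ n → w j = w k) :
    {ω | ∀ i ≤ n, stopped J A i ω = w i} ∩ exitsAt J A z =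
      {ω | ∀ i ≤ k, J i ω = w i} ∩ exitsAt J A z := by
  ext ω
  simp only [Set.mem_inter_iff, Set.mem_ofPred_eq, exitsAt]
  refine and_congr_left fun hexit => ?_
  have hτA : J (hitIdx J A ω) ω ∈ A := hexit ▸ hz
  constructor
  · intro hs i hi
    have hkτ : k ≤ hitIdx J A ω := by
      by_contra hlt
      have := hs _ (by omega : hitIdx J A ω ≤ n)
      rw [stopped_of_hitIdx_le le_rfl] at this
      exact hout _ (by omega) (this ▸ hτA)
    rw [← hs i (hi.trans hk), stopped_of_le_hitIdx (hi.trans hkτ)]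
  · intro hc i hi
    have hkτ : k ≤ hitIdx J A ω := by
      by_contra hlt
      exact hout _ (by omega) (hc (hitIdx J A ω) (by omega) ▸ hτA)
    by_cases hik : i ≤ k
    · rw [stopped_of_le_hitIdx (hik.trans hkτ), hc i hik]
    · have hwk : w k ∈ A := hend.resolve_left (by omega)
      have hτk : hitIdx J A ω = k := le_antisymm (hitIdx_le ((hc k le_rfl).symm ▸ hwk)) hkτ
      rw [stopped_of_hitIdx_le (by omega), hτk, hc k le_rfl, hfrozen i (by omega) hi]

lemma stoppedCyl_eq_empty {j : ℕ} (hkj : k ≤ j) (hjn : j ≤ n) (hwk : w k ∈ A)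
    (hne : w j ≠ w k) : {ω | ∀ i ≤ n, stopped J A i ω = w i} = ∅ := by
  refine Set.eq_empty_of_forall_notMem fun ω hs => hne ?_
  have hτk := hitIdx_le_of_stopped_mem ((hs k (hkj.trans hjn)).symm ▸ hwk)
  rw [← hs j hjn, ← hs k (hkj.trans hjn), stopped_of_hitIdx_le hτk,
    stopped_of_hitIdx_le (hτk.trans hkj)]

lemma stoppedCyl_inter_exitsAt_eq_empty {j : ℕ} (hjn : j ≤ n) (hwj : w j ∈ A) (hne : w j ≠ z) :
    {ω | ∀ i ≤ n, stopped J A i ω = w i} ∩ exitsAt J A z = ∅ := by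
  refine Set.eq_empty_of_forall_notMem fun ω ⟨hs, hexit⟩ => hne ?_
  rw [← hs j hjn, stopped_of_hitIdx_le (hitIdx_le_of_stopped_mem ((hs j hjn).symm ▸ hwj))]
  exact hexit

lemma cyl_inter_firstEntryAfter_succ {n j : ℕ} {w : ℕ → V} (hwA : w n ∉ A) :
    {ω | ∀ i ≤ n, J i ω = w i} ∩ firstEntryAfter J A z n (j + 1) =
      ⋃ u, {ω | ∀ i ≤ n + 1, J i ω = Function.update w (n + 1) u i} ∩
        firstEntryAfter J A z (n + 1) j := by
  have hidx : n + (j + 1) = n + 1 + j := by omega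
  ext ω
  simp only [firstEntryAfter, Set.mem_inter_iff, Set.mem_iUnion, Set.mem_ofPred_eq, hidx]
  constructor
  · rintro ⟨hc, hout, hz⟩
    refine ⟨J (n + 1) ω, fun i hi => ?_, ⟨fun i h1 h2 => hout i (by omega) (by omega), hz⟩⟩
    rcases eq_or_ne i (n + 1) with rfl | hne
    · rw [Function.update_self]
    · rw [Function.update_of_ne hne, hc i (by omega)]
  · rintro ⟨u, hc, hout, hz⟩
    have hc' : ∀ i ≤ n, J i ω = w i := fun i hi => by
      rw [hc i (by omega), Function.update_of_ne (by omega)]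
    refine ⟨hc', fun i h1 h2 => ?_, hz⟩
    rcases eq_or_ne i n with rfl | hne
    · rwa [hc' i le_rfl]
    · exact hout i (by omega) (by omega)

lemma cyl_inter_exitsAt_eq_iUnion (hz : z ∈ A) (hw : ∀ i < n, w i ∉ A) :
    {ω | ∀ i ≤ n, J i ω = w i} ∩ exitsAt J A z =
      ⋃ j, {ω | ∀ i ≤ n, J i ω = w i} ∩ firstEntryAfter J A z n j := by
  rw [← Set.inter_iUnion]
  ext ω
  simp only [Set.mem_inter_iff, Set.mem_iUnion, exitsAt, firstEntryAfter, Set.mem_ofPred_eq]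
  refine and_congr_right fun hc => ⟨fun hexit => ?_, fun ⟨j, hout, hj⟩ => ?_⟩
  · have hnτ : n ≤ hitIdx J A ω := by
      by_contra hlt
      exact hw _ (by omega) (hc (hitIdx J A ω) (by omega) ▸ hexit ▸ hz)
    refine ⟨hitIdx J A ω - n, fun i _ hi => notMem_of_lt_hitIdx (by omega), ?_⟩
    rwa [Nat.add_sub_cancel' hnτ]
  · have hjA : J (n + j) ω ∈ A := hj ▸ hz
    have hτ : hitIdx J A ω = n + j := by
      refine le_antisymm (hitIdx_le hjA) (not_lt.1 fun hlt => ?_)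
      by_cases hτn : hitIdx J A ω < n
      · exact hw _ hτn (hc _ hτn.le ▸ hitIdx_mem hjA)
      · exact hout _ (by omega) hlt (hitIdx_mem hjA)
    rw [hτ, hj]

lemma pairwise_disjoint_firstEntryAfter (hz : z ∈ A) :
    Pairwise (Function.onFun Disjoint fun j => firstEntryAfter J A z n j) := by
  intro j j' hne
  refine Set.disjoint_left.2 fun ω ⟨hout, hj⟩ ⟨hout', hj'⟩ => ?_
  rcases hne.lt_or_gt with h | h
  · exact hout' (n + j) (by omega) (by omega) (hj ▸ hz)
  · exact hout (n + j') (by omega) (by omega) (hj' ▸ hz)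

end Stopping

section Measurability

variable {V Ω : Type} [MeasurableSpace V] [MeasurableSpace Ω] {J : ℕ → Ω → V}

lemma measurable_apply_of_measurable_index (hJ : ∀ n, Measurable (J n)) {τ : Ω → ℕ}
    (hτ : Measurable τ) : Measurable fun ω => J (τ ω) ω :=
  (measurable_from_prod_countable_right (f := fun p : ℕ × Ω => J p.1 p.2) hJ).comp
    (hτ.prodMk measurable_id)

variable [MeasurableSingletonClass V]

lemma measurableSet_cyl (hJ : ∀ n, Measurable (J n)) (n : ℕ) (w : ℕ → V) :
    MeasurableSet {ω | ∀ i ≤ n, J i ω = w i} :=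
  (measurableSet_prefixCyl n w).preimage (measurable_pi_lambda _ hJ)

variable [Countable V]

lemma measurable_hitIdx (hJ : ∀ n, Measurable (J n)) (A : Set V) :
    Measurable (hitIdx J A) := by
  have hA : ∀ i, MeasurableSet {ω | J i ω ∈ A} := fun i => hJ i (Set.to_countable A).measurableSet
  refine measurable_to_countable' fun k => ?_
  have : hitIdx J A ⁻¹' {k} =
      {ω | (J k ω ∈ A ∧ ∀ i < k, J i ω ∉ A) ∨ (k = 0 ∧ ∀ i, J i ω ∉ A)} :=
    Set.ext fun ω => hitIdx_eq_iff
  rw [this]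
  simp only [Set.ofPred_or, Set.ofPred_and, Set.ofPred_forall]
  exact ((hA k).inter (.iInter fun i => .iInter fun _ => (hA i).compl)).union
    ((MeasurableSet.const _).inter (.iInter fun i => (hA i).compl))

lemma measurable_stopped (hJ : ∀ n, Measurable (J n)) (A : Set V) (n : ℕ) :
    Measurable (stopped J A n) :=
  measurable_apply_of_measurable_index hJ (measurable_const.min (measurable_hitIdx hJ A))

lemma measurableSet_exitsAt (hJ : ∀ n, Measurable (J n)) (A : Set V) (z : V) :
    MeasurableSet (exitsAt J A z) :=
  measurable_apply_of_measurable_index hJ (measurable_hitIdx hJ A) (measurableSet_singleton z)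

lemma measurableSet_firstEntryAfter (hJ : ∀ n, Measurable (J n)) (A : Set V) (z : V) (n j : ℕ) :
    MeasurableSet (firstEntryAfter J A z n j) := by
  simp only [firstEntryAfter, Set.ofPred_and, Set.ofPred_forall]
  exact (MeasurableSet.iInter fun i => MeasurableSet.iInter fun _ => MeasurableSet.iInter fun _ =>
    (hJ i (Set.to_countable A).measurableSet).compl) |>.inter (hJ _ (measurableSet_singleton z))

end Measurability

namespace IsDiscreteWalk

variable {V Ω : Type} [Fintype V] [MeasurableSpace V] [MeasurableSpace Ω] {G : ElecNetwork V}
  {v₀ : V} {P : Measure Ω} {J : ℕ → Ω → V}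

lemma measure_cyl (hJ : IsDiscreteWalk G v₀ P J) (n : ℕ) (w : ℕ → V) :
    P {ω | ∀ i ≤ n, J i ω = w i} = (if w 0 = v₀ then 1 else 0) * G.pathProb n w :=
  hJ.2 n w

lemma measure_start (hJ : IsDiscreteWalk G v₀ P J) (v : V) :
    P {ω | J 0 ω = v} = if v = v₀ then 1 else 0 := by
  simpa [ElecNetwork.pathProb] using hJ.measure_cyl 0 fun _ => v

variable [MeasurableSingletonClass V]

lemma isProbabilityMeasure (hJ : IsDiscreteWalk G v₀ P J) : IsProbabilityMeasure P := by
  constructor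
  rw [← Set.preimage_univ (f := J 0), ← Finset.coe_univ,
    ← sum_measure_preimage_singleton _ fun v _ => hJ.1 0 (measurableSet_singleton v)]
  simp [Set.preimage, hJ.measure_start]

variable {A : Set V} {z : V}

lemma measure_cyl_inter_firstEntryAfter (hJ : IsDiscreteWalk G v₀ P J) (j : ℕ) :
    ∀ n w, P ({ω | ∀ i ≤ n, J i ω = w i} ∩ firstEntryAfter J A z n j) =
      (if w 0 = v₀ then 1 else 0) * G.pathProb n w * G.firstHitProb A z j (w n) := by
  induction j with
  | zero =>
    intro n w
    by_cases hwz : w n = z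
    · rw [Set.inter_eq_left.2 fun ω hω => by
          simp only [firstEntryAfter, Set.mem_ofPred_eq]
          exact ⟨fun i h1 h2 => by omega, (hω n le_rfl).trans hwz⟩,
        hJ.measure_cyl, ElecNetwork.firstHitProb, if_pos hwz, mul_one]
    · rw [ElecNetwork.firstHitProb, if_neg hwz, mul_zero, ← measure_empty (μ := P)]
      exact congrArg P (Set.eq_empty_of_forall_notMem fun ω ⟨hω, _, hz⟩ =>
        hwz ((hω n le_rfl).symm.trans hz))
  | succ j ih =>
    intro n w
    by_cases hwA : w n ∈ A
    · rw [ElecNetwork.firstHitProb, if_pos hwA, mul_zero, ← measure_empty (μ := P)]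
      exact congrArg P (Set.eq_empty_of_forall_notMem fun ω ⟨hω, hout, _⟩ =>
        hout n le_rfl (by omega) ((hω n le_rfl).symm ▸ hwA))
    have hdisj : Pairwise (Function.onFun Disjoint fun u =>
        {ω | ∀ i ≤ n + 1, J i ω = Function.update w (n + 1) u i} ∩
          firstEntryAfter J A z (n + 1) j) := fun u u' hne =>
      Set.disjoint_left.2 fun ω ⟨h, _⟩ ⟨h', _⟩ => hne <| by
        simpa using (h (n + 1) le_rfl).symm.trans (h' (n + 1) le_rfl)
    rw [cyl_inter_firstEntryAfter_succ hwA, measure_iUnion hdisj fun u =>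
      (measurableSet_cyl hJ.1 _ _).inter (measurableSet_firstEntryAfter hJ.1 _ _ _ _), tsum_fintype]
    simp only [ih, ElecNetwork.pathProb_succ_update, Function.update_self,
      Function.update_of_ne (by omega : 0 ≠ n + 1), ElecNetwork.firstHitProb, if_neg hwA,
      Finset.mul_sum]
    exact Finset.sum_congr rfl fun u _ => by ring

lemma measure_cyl_inter_exitsAt (hJ : IsDiscreteWalk G v₀ P J) (hz : z ∈ A) {n : ℕ}
    {w : ℕ → V} (hw : ∀ i < n, w i ∉ A) :
    P ({ω | ∀ i ≤ n, J i ω = w i} ∩ exitsAt J A z) =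
      (if w 0 = v₀ then 1 else 0) * G.pathProb n w * G.hitProb A z (w n) := by
  rw [cyl_inter_exitsAt_eq_iUnion hz hw, measure_iUnion
    (fun j j' hne => ((pairwise_disjoint_firstEntryAfter hz hne).mono Set.inter_subset_right
      Set.inter_subset_right))
    fun j => (measurableSet_cyl hJ.1 _ _).inter (measurableSet_firstEntryAfter hJ.1 _ _ _ _)]
  simp only [hJ.measure_cyl_inter_firstEntryAfter, ENNReal.tsum_mul_left]
  rfl

lemma measure_exitsAt (hJ : IsDiscreteWalk G v₀ P J) (hz : z ∈ A) :
    P (exitsAt J A z) = G.hitProb A z v₀ := by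
  have := hJ.isProbabilityMeasure
  have hstart : P {ω | ∀ i ≤ 0, J i ω = v₀}ᶜ = 0 := by
    rw [prob_compl_eq_zero_iff (measurableSet_cyl hJ.1 0 fun _ => v₀)]
    simpa [ElecNetwork.pathProb] using hJ.measure_cyl 0 fun _ => v₀
  rw [← measure_inter_conull hstart, Set.inter_comm,
    hJ.measure_cyl_inter_exitsAt (w := fun _ => v₀) hz fun i hi => absurd hi (Nat.not_lt_zero i)]
  simp [ElecNetwork.pathProb]

lemma measure_stoppedCyl_inter_exitsAt (hJ : IsDiscreteWalk G v₀ P J) (hz : z ∈ A)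
    {n k : ℕ} {w : ℕ → V} (hk : k ≤ n) (hout : ∀ i < k, w i ∉ A) (hend : k = n ∨ w k ∈ A)
    (hfrozen : ∀ j, k ≤ j → j ≤ n → w j = w k) :
    P ({ω | ∀ i ≤ n, stopped J A i ω = w i} ∩ exitsAt J A z) =
      (if w 0 = v₀ then 1 else 0) * G.pathProb k w * G.hitProb A z (w k) := by
  rw [stoppedCyl_inter_exitsAt_eq hz hk hout hend hfrozen, hJ.measure_cyl_inter_exitsAt hz hout]

end IsDiscreteWalk

section ConditionedWalk

variable {V V' Ω Ω' : Type} [Fintype V] [MeasurableSpace V] [MeasurableSingletonClass V]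
  [Fintype V'] [MeasurableSpace V'] [MeasurableSingletonClass V'] [MeasurableSpace Ω]
  [MeasurableSpace Ω'] {G : ElecNetwork V} {G' : ElecNetwork V'} {e : V' → V} {A : Set V}
  {z' v₀' : V'} {P : Measure Ω} {X : ℕ → Ω → V} {P' : Measure Ω'} {Y : ℕ → Ω' → V'}

lemma IsDiscreteWalk.measure_stoppedCyl_eq_of_isDoobTransform
    (hX : IsDiscreteWalk G (e v₀') P X) (hY : IsDiscreteWalk G' v₀' P' Y)
    (htr : IsDoobTransform G G' e A (G.hitProb A (e z'))) (he : Function.Injective e)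
    (hA : ∀ v ∉ Set.range e, v ∈ A) (hz : e z' ∈ A) (hv₀ : G.hitProb A (e z') (e v₀') ≠ 0)
    (n : ℕ) (u : ℕ → V') :
    (P (exitsAt X A (e z')))⁻¹ *
        P (exitsAt X A (e z') ∩ {ω | ∀ i ≤ n, stopped X A i ω = e (u i)}) =
      P' {ω | ∀ i ≤ n, stopped Y (e ⁻¹' A) i ω = u i} := by
  have hv₀_top := ElecNetwork.hitProb_ne_top (G := G) hz (e v₀')
  have hexitY : P' (exitsAt Y (e ⁻¹' A) z')ᶜ = 0 := by
    have := hY.isProbabilityMeasure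
    rw [prob_compl_eq_zero_iff (measurableSet_exitsAt hY.1 _ _), hY.measure_exitsAt hz]
    exact (ENNReal.mul_eq_right hv₀ hv₀_top).1 (htr.hitProb_mul_eq he hA hz v₀')
  rw [hX.measure_exitsAt hz, ← measure_inter_conull hexitY, Set.inter_comm (exitsAt X _ _)]
  obtain ⟨k, hk, hout, hend⟩ := exists_stopIdx (e ⁻¹' A) n u
  by_cases hfrozen : ∀ j, k ≤ j → j ≤ n → u j = u k
  · rw [hX.measure_stoppedCyl_inter_exitsAt (w := fun i => e (u i)) hz hk hout hend
      fun j h1 h2 => congrArg e (hfrozen j h1 h2),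
      hY.measure_stoppedCyl_inter_exitsAt hz hk hout hend hfrozen]
    by_cases h0 : u 0 = v₀'
    · rw [if_pos (congrArg e h0), if_pos h0, one_mul, one_mul,
        ← htr.hitProb_mul_eq he hA hz (u k), mul_left_comm (G.pathProb _ _),
        ← htr.pathProb_mul_eq hout, h0,
        show G'.hitProb (e ⁻¹' A) z' (u k) * (G'.pathProb k u * G.hitProb A (e z') (e v₀')) =
          G.hitProb A (e z') (e v₀') * (G'.pathProb k u * G'.hitProb (e ⁻¹' A) z' (u k)) by ring,
        ← mul_assoc, ENNReal.inv_mul_cancel hv₀ hv₀_top, one_mul]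
    · simp [h0, he.ne h0]
  · push Not at hfrozen
    obtain ⟨j, hkj, hjn, hne⟩ := hfrozen
    have hkA : e (u k) ∈ A := hend.resolve_left fun h => hne (by rw [show j = k by omega])
    rw [stoppedCyl_eq_empty hkj hjn hkA (he.ne hne),
      stoppedCyl_eq_empty (w := u) (A := e ⁻¹' A) hkj hjn hkA hne]
    simp

theorem IsDiscreteWalk.map_cond_stopped_eq_of_isDoobTransform
    (hX : IsDiscreteWalk G (e v₀') P X) (hY : IsDiscreteWalk G' v₀' P' Y)
    (htr : IsDoobTransform G G' e A (G.hitProb A (e z'))) (he : Function.Injective e)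
    (hA : ∀ v ∉ Set.range e, v ∈ A) (hz : e z' ∈ A) (hv₀ : G.hitProb A (e z') (e v₀') ≠ 0) :
    (P[|exitsAt X A (e z')]).map (fun ω n => stopped X A n ω) =
      P'.map (fun ω n => e (stopped Y (e ⁻¹' A) n ω)) := by
  have hE := hX.measure_exitsAt (G := G) hz
  have := cond_isProbabilityMeasure_of_finite (hE ▸ hv₀ : P (exitsAt X A (e z')) ≠ 0)
    (hE ▸ ElecNetwork.hitProb_ne_top hz _)
  have := hY.isProbabilityMeasure
  have hmX : Measurable fun ω n => stopped X A n ω :=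
    measurable_pi_lambda _ (measurable_stopped hX.1 A)
  have hmY : Measurable fun ω n => e (stopped Y (e ⁻¹' A) n ω) :=
    measurable_pi_lambda _ fun n => (measurable_of_countable e).comp (measurable_stopped hY.1 _ n)
  have := Measure.isProbabilityMeasure_map (μ := P[|exitsAt X A (e z')]) hmX.aemeasurable
  have := Measure.isProbabilityMeasure_map (μ := P') hmY.aemeasurable
  refine Measure.ext_of_prefixCyl fun n w => ?_
  rw [Measure.map_apply hmX (measurableSet_prefixCyl n w), Measure.map_apply hmY
    (measurableSet_prefixCyl n w), cond_apply' (hmX (measurableSet_prefixCyl n w))]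
  by_cases hw : ∀ i ≤ n, w i ∈ Set.range e
  · have : Nonempty V' := ⟨v₀'⟩
    have hu : ∀ i ≤ n, e (Function.invFun e (w i)) = w i := fun i hi =>
      Function.invFun_eq (hw i hi)
    have hXset : (fun ω n => stopped X A n ω) ⁻¹' prefixCyl n w =
        {ω | ∀ i ≤ n, stopped X A i ω = e (Function.invFun e (w i))} :=
      Set.ext fun ω => forall₂_congr fun i hi => by rw [hu i hi]
    have hYset : (fun ω n => e (stopped Y (e ⁻¹' A) n ω)) ⁻¹' prefixCyl n w =
        {ω | ∀ i ≤ n, stopped Y (e ⁻¹' A) i ω = Function.invFun e (w i)} :=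
      Set.ext fun ω => forall₂_congr fun i hi => by rw [← he.eq_iff, hu i hi]
    rw [hXset, hYset]
    exact hX.measure_stoppedCyl_eq_of_isDoobTransform hY htr he hA hz hv₀ n _
  · push Not at hw
    obtain ⟨i, hi, hwi⟩ := hw
    have hXempty : {ω | ∀ i ≤ n, stopped X A i ω = w i} ∩ exitsAt X A (e z') = ∅ :=
      stoppedCyl_inter_exitsAt_eq_empty hi (hA _ hwi) fun h => hwi ⟨z', h.symm⟩
    have hYempty : (fun ω n => e (stopped Y (e ⁻¹' A) n ω)) ⁻¹' prefixCyl n w = ∅ :=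
      Set.eq_empty_of_forall_notMem fun ω hω => hwi ⟨_, hω i hi⟩
    rw [hYempty, Set.inter_comm]
    change _ * P ({ω | ∀ i ≤ n, stopped X A i ω = w i} ∩ _) = _
    simp [hXempty]

end ConditionedWalk

namespace IsPathNetwork

variable {M : ℕ} {G : ElecNetwork (Fin M)} {cf : ℕ → ℝ}

lemma sum_c_mul (hG : IsPathNetwork G cf) {x : Fin M} (hx0 : 0 < x.val) (hxM : x.val + 1 < M)
    (F : ℕ → ℝ) :
    ∑ u, G.c x u * F u = cf (x - 1) * F (x - 1) + cf x * F (x + 1) := by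
  simp only [hG x, pathC]
  rw [Fin.sum_univ_eq_sum_range (fun j =>
      (if x.val + 1 = j then cf x else if j + 1 = x.val then cf j else 0) * F j) M,
    Finset.sum_eq_add_of_mem (x.val - 1) (x.val + 1) (by simp; omega) (by simp; omega)
      (by omega) fun j _ hj => by rw [if_neg (by omega), if_neg (by omega), zero_mul]]
  rw [if_neg (by omega), if_pos (by omega), if_pos rfl, add_comm]

lemma sum_jump_mul (hG : IsPathNetwork G cf) {x : Fin M} (hx0 : 0 < x.val)
    (hxM : x.val + 1 < M) (F : ℕ → ℝ) :
    ∑ u, G.jump x u * F u =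
      (cf (x - 1) * F (x - 1) + cf x * F (x + 1)) / (cf (x - 1) + cf x) := by
  have hcTot : G.cTot x = cf (x - 1) + cf x := by
    simpa [ElecNetwork.cTot] using hG.sum_c_mul hx0 hxM fun _ => 1
  simp only [ElecNetwork.jump, div_mul_eq_mul_div, ← Finset.sum_div, hG.sum_c_mul hx0 hxM, hcTot]

end IsPathNetwork

lemma sub_eq_mul_sum_inv_of_current_eq {cf f : ℕ → ℝ} {M : ℕ} (hcf : ∀ k, cf k ≠ 0)
    (h : ∀ k, 0 < k → k < M → cf (k - 1) * (f (k - 1) - f k) = cf k * (f k - f (k + 1)))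
    {k : ℕ} (hk : k ≤ M) :
    f 0 - f k = cf 0 * (f 0 - f 1) * ∑ j ∈ Finset.range k, (cf j)⁻¹ := by
  have hcurrent : ∀ j < M, cf j * (f j - f (j + 1)) = cf 0 * (f 0 - f 1) := by
    intro j hj
    induction j with
    | zero => rfl
    | succ j ih => rw [← h (j + 1) (by omega) hj, Nat.add_sub_cancel, ih (by omega)]
  rw [← Finset.sum_range_sub', Finset.mul_sum]
  refine Finset.sum_congr rfl fun j hj => ?_
  rw [← hcurrent j (by simp at hj; omega)]
  field_simp [hcf j]

section ConditionedPath

variable {N : ℕ} {r : ℝ}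

lemma toReal_hitProb_pathNetwork (hr : 0 < r) {G : ElecNetwork (Fin (N + 2))}
    (hG : IsPathNetwork G fun k => if k < N then (1 : ℝ) else r) {v : Fin (N + 2)}
    (hv : v.val ≤ N) :
    (G.hitProb {v | v.val = 0 ∨ v.val = N + 1} 0 v).toReal =
      ((N : ℝ) - v.val + 1 / r) / (N + 1 / r) := by
  set A : Set (Fin (N + 2)) := {v | v.val = 0 ∨ v.val = N + 1}
  set cf : ℕ → ℝ := fun k => if k < N then 1 else r
  set f : ℕ → ℝ := fun k => if h : k < N + 2 then (G.hitProb A 0 ⟨k, h⟩).toReal else 0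
  have hfv : ∀ u : Fin (N + 2), f u = (G.hitProb A 0 u).toReal := fun u => dif_pos u.isLt
  have hcf : ∀ k, 0 < cf k := fun k => by simp only [cf]; split_ifs <;> linarith
  have hz : (0 : Fin (N + 2)) ∈ A := Or.inl rfl
  have hf0 : f 0 = 1 := by simp [f, ElecNetwork.hitProb_of_mem hz]
  have hfN : f (N + 1) = 0 := by
    have hmem : (Fin.last (N + 1)) ∈ A := Or.inr rfl
    simpa [hfv, ElecNetwork.hitProb_of_mem hmem, Fin.ext_iff] using hfv (Fin.last (N + 1))
  have harm : ∀ k, 0 < k → k < N + 1 →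
      cf (k - 1) * (f (k - 1) - f k) = cf k * (f k - f (k + 1)) := by
    intro k hk0 hkN
    have hvA : (⟨k, by omega⟩ : Fin (N + 2)) ∉ A := by simp [A]; omega
    have h := ElecNetwork.toReal_hitProb_of_notMem (G := G) hz hvA
    simp only [← hfv, hG.sum_jump_mul (x := ⟨k, by omega⟩) hk0 (by simp; omega)] at h
    rw [eq_div_iff (add_pos (hcf _) (hcf _)).ne'] at h
    linarith
  have hsum : ∀ k ≤ N, ∑ j ∈ Finset.range k, (cf j)⁻¹ = k := fun k hk => by
    rw [Finset.sum_congr rfl fun j hj => show (cf j)⁻¹ = 1 by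
      simp [cf, show j < N by simp at hj; omega]]
    simp
  have hexit := sub_eq_mul_sum_inv_of_current_eq (fun k => (hcf k).ne') harm le_rfl
  have hv' := sub_eq_mul_sum_inv_of_current_eq (fun k => (hcf k).ne') harm (hv.trans N.le_succ)
  rw [Finset.sum_range_succ, hsum N le_rfl, hf0, hfN] at hexit
  rw [hsum _ hv, hf0, hfv] at hv'
  simp only [cf, lt_irrefl, if_false] at hexit
  rw [eq_div_iff (by positivity)]
  linear_combination (-(N + 1 / r)) * hv' + (v.val : ℝ) * hexit

lemma c_eq_of_pathNetwork (hr : 0 < r) {G : ElecNetwork (Fin (N + 2))}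
    (hG : IsPathNetwork G fun k => if k < N then (1 : ℝ) else r) {G' : ElecNetwork (Fin (N + 1))}
    (hG' : IsPathNetwork G' fun k =>
      ((N : ℝ) - k - 1 + 1 / r) * ((N : ℝ) - k + 1 / r) / (1 / r * (1 + 1 / r)))
    (x y : Fin (N + 1)) :
    G'.c x y = (N + 1 / r) ^ 2 / (1 / r * (1 + 1 / r)) * G.c x.castSucc y.castSucc *
      (G.hitProb {v | v.val = 0 ∨ v.val = N + 1} 0 x.castSucc).toReal *
      (G.hitProb {v | v.val = 0 ∨ v.val = N + 1} 0 y.castSucc).toReal := by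
  have hx : x.val ≤ N := Nat.lt_succ_iff.1 x.isLt
  have hy : y.val ≤ N := Nat.lt_succ_iff.1 y.isLt
  rw [toReal_hitProb_pathNetwork hr hG hx, toReal_hitProb_pathNetwork hr hG hy, hG', hG]
  simp only [pathC, Fin.val_castSucc]
  split_ifs with h1 _ h3 <;> try omega
  · have hy' : (y.val : ℝ) = x.val + 1 := by exact_mod_cast h1.symm
    rw [hy']
    field_simp
    ring
  · have hx' : (x.val : ℝ) = y.val + 1 := by exact_mod_cast h3.symm
    rw [hx']
    field_simp
    ring
  · simp

lemma hitProb_pathNetwork_ne_zero (hr : 0 < r) {G : ElecNetwork (Fin (N + 2))}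
    (hG : IsPathNetwork G fun k => if k < N then (1 : ℝ) else r) {v : Fin (N + 2)}
    (hv : v.val ≤ N) : G.hitProb {v | v.val = 0 ∨ v.val = N + 1} 0 v ≠ 0 := by
  have hpos : 0 < (G.hitProb {v | v.val = 0 ∨ v.val = N + 1} 0 v).toReal := by
    rw [toReal_hitProb_pathNetwork hr hG hv]
    have : (v.val : ℝ) ≤ N := by exact_mod_cast hv
    have := one_div_pos.2 hr
    exact div_pos (by linarith) (by positivity)
  exact (ENNReal.toReal_pos_iff.1 hpos).1.ne'

lemma mem_of_notMem_range_castSucc :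
    ∀ v ∉ Set.range (Fin.castSucc : Fin (N + 1) → Fin (N + 2)), v.val = 0 ∨ v.val = N + 1 := by
  intro v hv
  rw [Fin.range_castSucc] at hv
  exact Or.inr (by simp at hv; omega)

end ConditionedPath

end

/-- **Conditioned walk on a path is a walk on a reweighted path** (Lemma 2.5).
For the path `0, …, N+1` with unit conductances except `c_{N,N+1} = r`, the
discrete-time walk `X` started at `m` and stopped upon hitting `{0, N+1}`,
conditioned on exiting at `0`, has the same path law as the discrete-time walk `Y`
on the path `0, …, N` with conductances
`c'_{k,k+1} = (N−k−1+1/r)(N−k+1/r)/((1/r)(1+1/r))`, started at `m` and stopped upon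
hitting `0`. -/
theorem conditioned_path_walk
    (N : ℕ) (r : ℝ) (hr : 0 < r)
    (G : ElecNetwork (Fin (N + 2)))
    (hG : IsPathNetwork G (fun k => if k < N then (1 : ℝ) else r))
    (G' : ElecNetwork (Fin (N + 1)))
    (hG' : IsPathNetwork G' (fun k =>
      ((N : ℝ) - k - 1 + 1 / r) * ((N : ℝ) - k + 1 / r) / (1 / r * (1 + 1 / r))))
    (m : ℕ) (hmN : m ≤ N)
    (Ω : Type) [MeasurableSpace Ω] (P : Measure Ω)
    (X : ℕ → Ω → Fin (N + 2)) (hX : IsDiscreteWalk G ⟨m, by omega⟩ P X)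
    (Ω' : Type) [MeasurableSpace Ω'] (P' : Measure Ω')
    (Y : ℕ → Ω' → Fin (N + 1)) (hY : IsDiscreteWalk G' ⟨m, by omega⟩ P' Y) :
    (P[|{ω | (X (hitIdx X {v | v.val = 0 ∨ v.val = N + 1} ω) ω).val = 0}]).map
        (fun ω => fun n => (stopped X {v | v.val = 0 ∨ v.val = N + 1} n ω).val) =
      P'.map (fun ω' => fun n => (stopped Y {v | v.val = 0} n ω').val) := by
  set A : Set (Fin (N + 2)) := {v | v.val = 0 ∨ v.val = N + 1}
  have he : Function.Injective (Fin.castSucc : Fin (N + 1) → Fin (N + 2)) :=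
    Fin.castSucc_injective _
  have htr : IsDoobTransform G G' Fin.castSucc A (G.hitProb A (Fin.castSucc 0)) :=
    isDoobTransform_hitProb_of_c_eq he mem_of_notMem_range_castSucc (Or.inl rfl)
      (by positivity) (c_eq_of_pathNetwork hr hG hG')
  have hDoob := hX.map_cond_stopped_eq_of_isDoobTransform hY htr he mem_of_notMem_range_castSucc
    (Or.inl rfl) (hitProb_pathNetwork_ne_zero hr hG (v := Fin.castSucc ⟨m, _⟩) hmN)
  have hA' : Fin.castSucc ⁻¹' A = {v | v.val = 0} := Set.ext fun v => by simp [A]; omega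
  have hexit : {ω | (X (hitIdx X A ω) ω).val = 0} = exitsAt X A (Fin.castSucc 0) :=
    Set.ext fun ω => (Fin.ext_iff (b := Fin.castSucc 0)).symm
  have hval : Measurable fun (f : ℕ → Fin (N + 2)) n => (f n).val :=
    measurable_pi_lambda _ fun n => (measurable_of_countable _).comp (measurable_pi_apply n)
  have hmY : Measurable fun ω n => (stopped Y {v | v.val = 0} n ω).castSucc :=
    measurable_pi_lambda _ fun n => (measurable_of_countable _).comp (measurable_stopped hY.1 _ n)
  rw [hA'] at hDoob
  have hvalDoob := congrArg (Measure.map fun (f : ℕ → Fin (N + 2)) n => (f n).val) hDoob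
  rw [Measure.map_map hval (measurable_pi_lambda _ (measurable_stopped hX.1 A)),
    Measure.map_map hval hmY] at hvalDoob
  rw [hexit]
  exact hvalDoob
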